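/- A semi-normalized basis {e_n} of a Banach space X with associated functionals {f_n} is supershrinking if and only if {x** ∈ X** : lim_n x**(f_n) = 0} equals the canonical image of X in X**. -/

import Mathlib

/-!
The basis projections `P_n` are uniformly bounded (Banach–Steinhaus), and for `F ∈ X**` one has
`F (g ∘ P_n) = g (∑_{i<n} F (f i) • e i)`, so the coordinate series of any `F` has bounded partial
sums. If `e` is shrinking then `g ∘ P_n → g` in norm, so `F` is the weak-* limit of these partial
sums; when moreover `F (f n) → 0`, supershrinkingness makes the series converge to some `x`, and
`F = J x`.

Conversely, a bounded sequence has a weak-* cluster point `F ∈ X**` (Banach–Alaoglu), whose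
coordinates are the eventual coordinates of the sequence. For the partial sums of a null
coefficient sequence with bounded partial sums this gives `F = J x` with the series summing to
`x`. For unit vectors in later and later tails on which some `g` stays `≥ ε`, it gives `F` with
zero coordinates, hence `F = 0`, contradicting `|F g| ≥ ε`.
-/

open Filter Finset NormedSpace

noncomputable section

variable {X : Type*} [NormedAddCommGroup X] [NormedSpace ℝ X]

/-- Partial sums `∑_{i<n} a i • e i`. -/
def PartialSum (e : ℕ → X) (a : ℕ → ℝ) (n : ℕ) : X :=
  ∑ i ∈ Finset.range n, a i • e i

/-- A (Schauder) basic sequence, via the basis-constant inequality. -/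
def IsBasicSeq (e : ℕ → X) : Prop :=
  (∀ n, e n ≠ 0) ∧ ∃ K : ℝ, 1 ≤ K ∧ ∀ (a : ℕ → ℝ) (m n : ℕ), m ≤ n →
    ‖PartialSum e a m‖ ≤ K * ‖PartialSum e a n‖

def SemiNormalized (e : ℕ → X) : Prop :=
  ∃ c C : ℝ, 0 < c ∧ ∀ n, c ≤ ‖e n‖ ∧ ‖e n‖ ≤ C

def BoundedPartialSums (e : ℕ → X) (a : ℕ → ℝ) : Prop :=
  ∃ M : ℝ, ∀ n, ‖PartialSum e a n‖ ≤ M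

def SeriesConverges (e : ℕ → X) (a : ℕ → ℝ) : Prop :=
  ∃ x : X, Filter.Tendsto (PartialSum e a) Filter.atTop (nhds x)

def BoundedlyComplete (e : ℕ → X) : Prop :=
  ∀ a : ℕ → ℝ, BoundedPartialSums e a → SeriesConverges e a

def WeaklyCauchy (e : ℕ → X) : Prop :=
  ∀ f : X →L[ℝ] ℝ, ∃ l : ℝ, Filter.Tendsto (fun n => f (e n)) Filter.atTop (nhds l)

def WeaklyConvergesTo (x : ℕ → X) (l : X) : Prop :=
  ∀ f : X →L[ℝ] ℝ, Filter.Tendsto (fun n => f (x n)) Filter.atTop (nhds (f l))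

def StronglySumming (e : ℕ → X) : Prop :=
  WeaklyCauchy e ∧ ∀ a : ℕ → ℝ, BoundedPartialSums e a →
    ∃ s : ℝ, Filter.Tendsto (fun n => ∑ i ∈ Finset.range n, a i) Filter.atTop (nhds s)

/-- Closed linear span of the tail `{e k : k ≥ n}`. -/
def tailSpan (e : ℕ → X) (n : ℕ) : Submodule ℝ X :=
  (Submodule.span ℝ {x | ∃ k, n ≤ k ∧ x = e k}).topologicalClosure

/-- Shrinking: the norms of a functional restricted to the tail spans tend to `0`. -/
def Shrinking (e : ℕ → X) : Prop :=
  ∀ f : X →L[ℝ] ℝ, ∀ ε > 0, ∃ N, ∀ n ≥ N, ∀ x ∈ tailSpan e n, ‖x‖ ≤ 1 → |f x| ≤ ε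

def Supershrinking (e : ℕ → X) : Prop :=
  Shrinking e ∧ ∀ a : ℕ → ℝ, Filter.Tendsto a Filter.atTop (nhds 0) →
    BoundedPartialSums e a → SeriesConverges e a

/-- Difference sequence: `v 0 = e 0`, `v n = e n - e (n-1)`. -/
def diffSeq (e : ℕ → X) : ℕ → X :=
  fun n => if n = 0 then e 0 else e n - e (n - 1)

def closedSpan (e : ℕ → X) : Submodule ℝ X :=
  (Submodule.span ℝ (Set.range e)).topologicalClosure

/-- A Banach space is reflexive iff the canonical embedding into the bidual is onto. -/
def BanachReflexive (Y : Type*) [NormedAddCommGroup Y] [NormedSpace ℝ Y] : Prop :=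
  Function.Surjective (NormedSpace.inclusionInDoubleDual ℝ Y)

/-- Order one quasireflexive: the canonical image of `Y` in `Y**` has codimension 1. -/
def OrderOneQuasireflexive (Y : Type*) [NormedAddCommGroup Y] [NormedSpace ℝ Y] : Prop :=
  Module.finrank ℝ ((StrongDual ℝ (StrongDual ℝ Y)) ⧸
    LinearMap.range (NormedSpace.inclusionInDoubleDual ℝ Y).toLinearMap) = 1

/-- A Schauder basis of `X` with coordinate functionals `f`. -/
def IsSchauderBasis (e : ℕ → X) (f : ℕ → X →L[ℝ] ℝ) : Prop :=
  (∀ n m, f n (e m) = if n = m then 1 else 0) ∧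
  ∀ x : X, Filter.Tendsto (fun n => ∑ i ∈ Finset.range n, f i x • e i)
    Filter.atTop (nhds x)

/-- `X` contains a sequence equivalent to the unit vector basis of `c₀`
(equivalently, a subspace isomorphic to `c₀`). -/
def ContainsC0 (X : Type*) [NormedAddCommGroup X] [NormedSpace ℝ X] : Prop :=
  ∃ (x : ℕ → X) (c C : ℝ), 0 < c ∧ ∀ (a : ℕ → ℝ) (n : ℕ),
    c * ((Finset.range (n+1)).sup' ⟨n, Finset.self_mem_range_succ n⟩ fun i => |a i|) ≤
        ‖∑ i ∈ Finset.range (n+1), a i • x i‖ ∧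
      ‖∑ i ∈ Finset.range (n+1), a i • x i‖ ≤
        C * ((Finset.range (n+1)).sup' ⟨n, Finset.self_mem_range_succ n⟩ fun i => |a i|)

/-- Equivalence of sequences: same convergent coefficient series. -/
def EquivSeq (e v : ℕ → X) : Prop :=
  ∀ a : ℕ → ℝ, SeriesConverges e a ↔ SeriesConverges v a


open Topology

/-- Banach–Alaoglu, applied to the image of `u` in the bidual. -/
theorem exists_bidual_mapClusterPt {𝕜 E : Type*} [NontriviallyNormedField 𝕜] [ProperSpace 𝕜]
    [NormedAddCommGroup E] [NormedSpace 𝕜 E] {u : ℕ → E} {M : ℝ} (hu : ∀ n, ‖u n‖ ≤ M) :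
    ∃ F : StrongDual 𝕜 (StrongDual 𝕜 E), ∀ g : StrongDual 𝕜 E,
      MapClusterPt (F g) atTop (fun n => g (u n)) := by
  set v : ℕ → WeakDual 𝕜 (StrongDual 𝕜 E) :=
    fun n => StrongDual.toWeakDual (inclusionInDoubleDual 𝕜 E (u n))
  have hv : map v atTop ≤
      𝓟 (WeakDual.toStrongDual ⁻¹' Metric.closedBall (0 : StrongDual 𝕜 (StrongDual 𝕜 E)) M) :=
    le_principal_iff.mpr <| mem_map.mpr <| Eventually.of_forall fun n => by
      simp only [Set.mem_preimage, Metric.mem_closedBall]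
      exact ((dist_zero_right (WeakDual.toStrongDual (v n))).trans_le
        (double_dual_bound 𝕜 E (u n))).trans (hu n)
  obtain ⟨Φ, -, hΦ⟩ := (WeakDual.isCompact_closedBall 0 M).exists_mapClusterPt hv
  exact ⟨WeakDual.toStrongDual Φ,
    fun g => hΦ.continuousAt_comp (WeakDual.eval_continuous g).continuousAt⟩

theorem MapClusterPt.eq_of_eventually_eq {α Y : Type*} [TopologicalSpace Y] [T1Space Y]
    {l : Filter α} {u : α → Y} {t a : Y} (h : MapClusterPt t l u) (hu : ∀ᶠ n in l, u n = a) :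
    t = a :=
  isClosed_singleton.mem_of_mapClusterPt h hu

def basisProj (e : ℕ → X) (f : ℕ → X →L[ℝ] ℝ) (n : ℕ) : X →L[ℝ] X :=
  ∑ i ∈ Finset.range n, (f i).smulRight (e i)

theorem basisProj_apply (e : ℕ → X) (f : ℕ → X →L[ℝ] ℝ) (n : ℕ) (x : X) :
    basisProj e f n x = PartialSum e (fun i => f i x) n := by
  simp [basisProj, PartialSum]

theorem tailSpan_antitone (e : ℕ → X) : Antitone (tailSpan e) := by
  intro m n hmn
  apply Submodule.topologicalClosure_mono
  apply Submodule.span_mono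
  rintro _ ⟨k, hk, rfl⟩
  exact ⟨k, hmn.trans hk, rfl⟩

theorem Shrinking.exists_abs_le_mul_norm {e : ℕ → X} (hs : Shrinking e) (g : StrongDual ℝ X)
    {ε : ℝ} (hε : 0 < ε) : ∃ N, ∀ n ≥ N, ∀ z ∈ tailSpan e n, |g z| ≤ ε * ‖z‖ := by
  obtain ⟨N, hN⟩ := hs g ε hε
  refine ⟨N, fun n hn z hz => ?_⟩
  rcases eq_or_ne z 0 with rfl | hz0
  · simp
  have hr : 0 < ‖z‖ := norm_pos_iff.mpr hz0
  have hunit := hN n hn (‖z‖⁻¹ • z) (Submodule.smul_mem _ _ hz)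
    (by rw [norm_smul, norm_inv, norm_norm, inv_mul_cancel₀ hr.ne'])
  rw [map_smul, smul_eq_mul, abs_mul, abs_inv, abs_norm, inv_mul_le_iff₀ hr] at hunit
  linarith

theorem bidual_apply_comp_basisProj (e : ℕ → X) (f : ℕ → X →L[ℝ] ℝ)
    (F : StrongDual ℝ (StrongDual ℝ X)) (g : StrongDual ℝ X) (n : ℕ) :
    F (g.comp (basisProj e f n)) = g (PartialSum e (fun i => F (f i)) n) := by
  have hcomp : g.comp (basisProj e f n) = ∑ i ∈ Finset.range n, g (e i) • f i := by
    ext y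
    simp [basisProj_apply, PartialSum, mul_comm]
  simp [hcomp, PartialSum, mul_comm]

theorem boundedPartialSums_bidual_coord {e : ℕ → X} {f : ℕ → X →L[ℝ] ℝ} {K : ℝ} (hK0 : 0 ≤ K)
    (hK : ∀ n, ‖basisProj e f n‖ ≤ K) (F : StrongDual ℝ (StrongDual ℝ X)) :
    BoundedPartialSums e (fun i => F (f i)) := by
  refine ⟨K * ‖F‖, fun n => norm_le_dual_bound ℝ _ (by positivity) fun g => ?_⟩
  rw [← bidual_apply_comp_basisProj]
  calc ‖F (g.comp (basisProj e f n))‖ ≤ ‖F‖ * (‖g‖ * ‖basisProj e f n‖) :=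
        (F.le_opNorm _).trans (mul_le_mul_of_nonneg_left (g.opNorm_comp_le _) (norm_nonneg F))
    _ ≤ ‖F‖ * (‖g‖ * K) := by gcongr; exact hK n
    _ = K * ‖F‖ * ‖g‖ := by ring

theorem exists_bidual_coord_eq {f : ℕ → X →L[ℝ] ℝ} {u : ℕ → X} {M : ℝ} (hu : ∀ n, ‖u n‖ ≤ M)
    {a : ℕ → ℝ} (hua : ∀ k, ∀ᶠ n in atTop, f k (u n) = a k) :
    ∃ F : StrongDual ℝ (StrongDual ℝ X), (∀ k, F (f k) = a k) ∧
      ∀ g : StrongDual ℝ X, MapClusterPt (F g) atTop (fun n => g (u n)) := by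
  obtain ⟨F, hF⟩ := exists_bidual_mapClusterPt (𝕜 := ℝ) hu
  exact ⟨F, fun k => (hF (f k)).eq_of_eventually_eq (hua k), hF⟩

namespace IsSchauderBasis

variable {e : ℕ → X} {f : ℕ → X →L[ℝ] ℝ}

theorem coord_partialSum (hb : IsSchauderBasis e f) (a : ℕ → ℝ) (k n : ℕ) :
    f k (PartialSum e a n) = if k < n then a k else 0 := by
  simp [PartialSum, hb.1, Finset.sum_ite_eq]

theorem tendsto_partialSum_coord (hb : IsSchauderBasis e f) (x : X) :
    Tendsto (PartialSum e (fun i => f i x)) atTop (𝓝 x) :=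
  hb.2 x

theorem eq_zero_of_coord_eq_zero (hb : IsSchauderBasis e f) {x : X} (hx : ∀ k, f k x = 0) :
    x = 0 :=
  tendsto_nhds_unique (hb.tendsto_partialSum_coord x) <| by
    simpa only [hx] using tendsto_const_nhds.congr fun n => by simp [PartialSum]

theorem tendsto_basisProj (hb : IsSchauderBasis e f) (x : X) :
    Tendsto (fun n => basisProj e f n x) atTop (𝓝 x) := by
  simpa only [basisProj_apply] using hb.tendsto_partialSum_coord x

theorem exists_norm_basisProj_le [CompleteSpace X] (hb : IsSchauderBasis e f) :
    ∃ K, 0 ≤ K ∧ ∀ n, ‖basisProj e f n‖ ≤ K := by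
  obtain ⟨K, hK⟩ := banach_steinhaus fun x => (hb.tendsto_basisProj x).norm.bddAbove_range
    |>.imp fun _ hC n => hC ⟨n, rfl⟩
  exact ⟨max K 0, le_max_right _ _, fun n => (hK n).trans (le_max_left _ _)⟩

/-- The coordinates `f n x` tend to `0` because the terms `f n x • e n` of a convergent series
do and the `‖e n‖` are bounded below. -/
theorem tendsto_coord_zero (hb : IsSchauderBasis e f) {c : ℝ} (hc : 0 < c)
    (he : ∀ n, c ≤ ‖e n‖) (x : X) : Tendsto (fun n => f n x) atTop (𝓝 0) := by
  have hterm : Tendsto (fun n => f n x • e n) atTop (𝓝 0) := by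
    simpa [PartialSum, Finset.sum_range_succ] using
      ((hb.tendsto_partialSum_coord x).comp (tendsto_add_atTop_nat 1)).sub
        (hb.tendsto_partialSum_coord x)
  rw [tendsto_zero_iff_norm_tendsto_zero]
  refine squeeze_zero (fun n => norm_nonneg _) (fun n => ?_)
    (by simpa using hterm.norm.div_const c)
  rw [le_div_iff₀ hc, norm_smul]
  exact mul_le_mul_of_nonneg_left (he n) (norm_nonneg _)

theorem coord_eq_zero_of_mem_tailSpan (hb : IsSchauderBasis e f) {k n : ℕ} (hkn : k < n)
    {z : X} (hz : z ∈ tailSpan e n) : f k z = 0 := by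
  have hle : tailSpan e n ≤ LinearMap.ker (f k : X →ₗ[ℝ] ℝ) := by
    refine Submodule.topologicalClosure_minimal _ ?_ (f k).isClosed_ker
    rw [Submodule.span_le]
    rintro _ ⟨j, hj, rfl⟩
    simp [hb.1, show k ≠ j by omega]
  simpa using hle hz

theorem sub_basisProj_mem_tailSpan (hb : IsSchauderBasis e f) (x : X) (n : ℕ) :
    x - basisProj e f n x ∈ tailSpan e n := by
  refine (Submodule.isClosed_topologicalClosure _).mem_of_tendsto
    ((hb.tendsto_basisProj x).sub_const (basisProj e f n x))
    (eventually_atTop.mpr ⟨n, fun m hm => ?_⟩)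
  rw [basisProj_apply, basisProj_apply, PartialSum, PartialSum, ← Finset.sum_Ico_eq_sub _ hm]
  refine Submodule.sum_mem _ fun i hi => Submodule.smul_mem _ _ ?_
  exact Submodule.le_topologicalClosure _
    (Submodule.subset_span ⟨i, (Finset.mem_Ico.mp hi).1, rfl⟩)

/-- `g - g ∘ P_n` only sees the tail `x - P_n x`, whose norm is at most `(1 + K) ‖x‖`. -/
theorem tendsto_comp_basisProj (hb : IsSchauderBasis e f) (hs : Shrinking e) {K : ℝ}
    (hK0 : 0 ≤ K) (hK : ∀ n, ‖basisProj e f n‖ ≤ K) (g : StrongDual ℝ X) :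
    Tendsto (fun n => g.comp (basisProj e f n)) atTop (𝓝 g) := by
  rw [Metric.tendsto_atTop]
  intro ε hε
  have hδ : 0 < ε / (2 * (1 + K)) := by positivity
  obtain ⟨N, hN⟩ := hs.exists_abs_le_mul_norm g hδ
  refine ⟨N, fun n hn => ?_⟩
  have hbound : ‖g.comp (basisProj e f n) - g‖ ≤ ε / 2 := by
    refine ContinuousLinearMap.opNorm_le_bound _ (by positivity) fun y => ?_
    have htail : ‖y - basisProj e f n y‖ ≤ (1 + K) * ‖y‖ := by
      have hPy := ((basisProj e f n).le_opNorm y).trans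
        (mul_le_mul_of_nonneg_right (hK n) (norm_nonneg y))
      linarith [norm_sub_le y (basisProj e f n y)]
    calc ‖(g.comp (basisProj e f n) - g) y‖ = |g (y - basisProj e f n y)| := by
          simp [Real.norm_eq_abs, abs_sub_comm]
      _ ≤ ε / (2 * (1 + K)) * ((1 + K) * ‖y‖) :=
          (hN n hn _ (hb.sub_basisProj_mem_tailSpan y n)).trans
            (mul_le_mul_of_nonneg_left htail hδ.le)
      _ = ε / 2 * ‖y‖ := by field_simp
  rw [dist_eq_norm]
  linarith

theorem mem_range_of_supershrinking [CompleteSpace X] (hb : IsSchauderBasis e f)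
    (hs : Supershrinking e) {F : StrongDual ℝ (StrongDual ℝ X)}
    (hF : Tendsto (fun n => F (f n)) atTop (𝓝 0)) :
    F ∈ Set.range (inclusionInDoubleDual ℝ X) := by
  obtain ⟨K, hK0, hK⟩ := hb.exists_norm_basisProj_le
  obtain ⟨x, hx⟩ := hs.2 _ hF (boundedPartialSums_bidual_coord hK0 hK F)
  refine ⟨x, ContinuousLinearMap.ext fun g => tendsto_nhds_unique ?_
    ((F.continuous.tendsto g).comp (hb.tendsto_comp_basisProj hs.1 hK0 hK g))⟩
  simpa only [Function.comp_def, bidual_apply_comp_basisProj, dual_def] using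
    (g.continuous.tendsto x).comp hx

variable (hb : IsSchauderBasis e f)
  (hrange : ∀ F : StrongDual ℝ (StrongDual ℝ X), Tendsto (fun n => F (f n)) atTop (𝓝 0) →
    F ∈ Set.range (inclusionInDoubleDual ℝ X))
include hb hrange

theorem shrinking_of_forall_mem_range : Shrinking e := by
  by_contra hns
  simp only [Shrinking, not_forall, not_exists, not_le] at hns
  obtain ⟨g, ε, hε, hg⟩ := hns
  choose n hn x hx hx1 hgx using hg
  obtain ⟨F, hF0, hFg⟩ := exists_bidual_coord_eq hx1 (a := 0) fun k =>
    eventually_gt_atTop k |>.mono fun N hN =>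
      hb.coord_eq_zero_of_mem_tailSpan hN (tailSpan_antitone e (hn N) (hx N))
  obtain ⟨x₀, rfl⟩ := hrange F (by simp [hF0])
  have hx₀ : x₀ = 0 := hb.eq_zero_of_coord_eq_zero hF0
  have hεg : ε ≤ |g x₀| :=
    (isClosed_le continuous_const continuous_abs).mem_of_mapClusterPt (hFg g)
      (Eventually.of_forall fun N => (hgx N).le)
  simp [hx₀] at hεg
  linarith

theorem seriesConverges_of_forall_mem_range {a : ℕ → ℝ} (ha : Tendsto a atTop (𝓝 0))
    (hbd : BoundedPartialSums e a) : SeriesConverges e a := by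
  obtain ⟨M, hM⟩ := hbd
  obtain ⟨F, hFa, -⟩ := exists_bidual_coord_eq hM (a := a) fun k =>
    eventually_gt_atTop k |>.mono fun N hN => by rw [hb.coord_partialSum, if_pos hN]
  obtain ⟨x₀, rfl⟩ := hrange F (by simpa [hFa] using ha)
  exact ⟨x₀, funext hFa ▸ hb.tendsto_partialSum_coord x₀⟩

end IsSchauderBasis

/-- a semi-normalized basis is supershrinking iff
`{x** : lim x**(f n) = 0}` is exactly the canonical image of `X` in `X**`. -/
theorem stmt4 {X : Type*} [NormedAddCommGroup X] [NormedSpace ℝ X] [CompleteSpace X]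
    (e : ℕ → X) (f : ℕ → X →L[ℝ] ℝ) (hbasis : IsSchauderBasis e f)
    (hsn : SemiNormalized e) :
    Supershrinking e ↔
      {F : StrongDual ℝ (StrongDual ℝ X) |
          Filter.Tendsto (fun n => F (f n)) Filter.atTop (nhds 0)} =
        Set.range (NormedSpace.inclusionInDoubleDual ℝ X) := by
  obtain ⟨c, _, hc, hce⟩ := hsn
  have hsub : Set.range (inclusionInDoubleDual ℝ X) ⊆
      {F | Tendsto (fun n => F (f n)) atTop (𝓝 0)} := by
    rintro _ ⟨x, rfl⟩
    simpa using hbasis.tendsto_coord_zero hc (fun n => (hce n).1) x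
  constructor
  · intro hs
    exact Set.Subset.antisymm (fun F hF => hbasis.mem_range_of_supershrinking hs hF) hsub
  · intro heq
    have hrange : ∀ F : StrongDual ℝ (StrongDual ℝ X),
        Tendsto (fun n => F (f n)) atTop (𝓝 0) → F ∈ Set.range (inclusionInDoubleDual ℝ X) :=
      fun F hF => heq ▸ hF
    exact ⟨hbasis.shrinking_of_forall_mem_range hrange,
      fun a ha hbd => hbasis.seriesConverges_of_forall_mem_range hrange ha hbd⟩

end
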